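/- Let μ ∈ ℝ^K, σ² ∈ ℝ^K with σ²(b) > 0, and π ∈ ℝ^K with π(b) > 0 and ∑ π(b) = 1. Fix a ∈ [K] with μ(a) < max_b μ(b). Let Δ(a) = {w ∈ ℝ^K : w(a) = −1, w(b) ≥ 0 for b ≠ a, ∑_{b≠a} w(b) = 1}. Then (1/2) · max_{w ∈ Δ(a)} (∑_b w(b)μ(b))² / (∑_b w(b)²σ²(b)/π(b)) = inf_{μ̃ ∈ H_a} ∑_b π(b) (μ(b) − μ̃(b))² / (2σ²(b)), where H_a = {μ̃ ∈ ℝ^K : μ̃(a) ≥ μ̃(b) for all b}. -/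

import Mathlib

open Finset

private lemma quad_aux_pos {r c δ : ℝ} (hc : 0 < c) (hδ : 0 < δ)
    (h : ∀ t, 0 ≤ t → t ≤ δ → 0 ≤ -t * r + t ^ 2 * c) : r ≤ 0 := by
  by_contra hr
  push_neg at hr
  set t := min δ (r / (2 * c)) with ht
  have htpos : 0 < t := lt_min hδ (by positivity)
  have htle : t ≤ δ := min_le_left _ _
  have h2 : t * c ≤ r / 2 := by
    have : t ≤ r / (2 * c) := min_le_right _ _
    calc t * c ≤ (r / (2 * c)) * c := by nlinarith
    _ = r / 2 := by field_simp
  have := h t htpos.le htle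
  nlinarith

private lemma quad_aux_zero {r c δ : ℝ} (hc : 0 < c) (hδ : 0 < δ)
    (h : ∀ t, |t| ≤ δ → 0 ≤ -t * r + t ^ 2 * c) : r = 0 := by
  have h1 : r ≤ 0 := quad_aux_pos hc hδ (fun t ht0 htδ => h t (by rwa [abs_of_nonneg ht0]))
  have h2 : -r ≤ 0 := quad_aux_pos hc hδ (fun t ht0 htδ => by
    have := h (-t) (by rwa [abs_neg, abs_of_nonneg ht0])
    nlinarith)
  linarith
open Finset

private lemma weak_dual {K : ℕ} (μ σ2 π : Fin K → ℝ)
    (hσ : ∀ b, 0 < σ2 b) (hπ : ∀ b, 0 < π b)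
    (a : Fin K) (w m : Fin K → ℝ)
    (hwa : w a = -1) (hw0 : ∀ b, b ≠ a → 0 ≤ w b)
    (hws : ∑ b ∈ Finset.univ.erase a, w b = 1)
    (hwμ : 0 ≤ ∑ b, w b * μ b)
    (hm : ∀ b, m b ≤ m a) :
    (1 / 2) * (∑ b, w b * μ b) ^ 2 / (∑ b, (w b) ^ 2 * σ2 b / π b) ≤
      ∑ b, π b * (μ b - m b) ^ 2 / (2 * σ2 b) := by
  set Q := ∑ b, (w b) ^ 2 * σ2 b / π b with hQ
  have hQterm : ∀ b ∈ Finset.univ, 0 ≤ (w b) ^ 2 * σ2 b / π b := fun b _ =>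
    div_nonneg (mul_nonneg (sq_nonneg _) (hσ b).le) (hπ b).le
  have hQpos : 0 < Q := by
    have h1 : (w a) ^ 2 * σ2 a / π a ≤ Q := Finset.single_le_sum hQterm (mem_univ a)
    have h2 : (0:ℝ) < (w a)^2 * σ2 a / π a := by
      rw [hwa, show ((-1:ℝ))^2 = 1 by norm_num, one_mul]
      exact div_pos (hσ a) (hπ a)
    linarith
  set D := ∑ b, π b * (μ b - m b) ^ 2 / σ2 b with hD
  have hwm : ∑ b, w b * m b ≤ 0 := by
    have hsplit : ∑ b, w b * m b = w a * m a + ∑ b ∈ Finset.univ.erase a, w b * m b :=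
      (Finset.add_sum_erase _ _ (mem_univ a)).symm
    have hle : ∑ b ∈ Finset.univ.erase a, w b * m b ≤ ∑ b ∈ Finset.univ.erase a, w b * m a := by
      apply Finset.sum_le_sum
      intro b hb
      exact mul_le_mul_of_nonneg_left (hm b) (hw0 b (Finset.ne_of_mem_erase hb))
    rw [hsplit, hwa]
    have : ∑ b ∈ Finset.univ.erase a, w b * m a = m a := by
      rw [← Finset.sum_mul, hws, one_mul]
    nlinarith [hle, this]
  have hCS : (∑ b, w b * (μ b - m b)) ^ 2 ≤ Q * D := by
    have key := Finset.sum_mul_sq_le_sq_mul_sq Finset.univ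
      (fun b => w b * Real.sqrt (σ2 b / π b))
      (fun b => (μ b - m b) * Real.sqrt (π b / σ2 b))
    have e1 : ∀ b : Fin K, (w b * Real.sqrt (σ2 b / π b)) * ((μ b - m b) * Real.sqrt (π b / σ2 b))
        = w b * (μ b - m b) := by
      intro b
      have h1 : Real.sqrt (σ2 b / π b) * Real.sqrt (π b / σ2 b) = 1 := by
        rw [← Real.sqrt_mul (div_pos (hσ b) (hπ b)).le]
        rw [show σ2 b / π b * (π b / σ2 b) = 1 by
          rw [div_mul_div_comm, mul_comm (σ2 b) (π b)]
          exact div_self (mul_ne_zero (hπ b).ne' (hσ b).ne')]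
        exact Real.sqrt_one
      calc (w b * Real.sqrt (σ2 b / π b)) * ((μ b - m b) * Real.sqrt (π b / σ2 b))
          = w b * (μ b - m b) * (Real.sqrt (σ2 b / π b) * Real.sqrt (π b / σ2 b)) := by ring
        _ = w b * (μ b - m b) := by rw [h1, mul_one]
    have e2 : ∀ b : Fin K, (w b * Real.sqrt (σ2 b / π b)) ^ 2 = (w b) ^ 2 * σ2 b / π b := by
      intro b
      rw [mul_pow, Real.sq_sqrt (div_pos (hσ b) (hπ b)).le]; ring
    have e3 : ∀ b : Fin K, ((μ b - m b) * Real.sqrt (π b / σ2 b)) ^ 2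
        = π b * (μ b - m b) ^ 2 / σ2 b := by
      intro b
      rw [mul_pow, Real.sq_sqrt (div_pos (hπ b) (hσ b)).le]; ring
    simp only [e1, e2, e3] at key
    exact key
  have hnum : (∑ b, w b * μ b) ^ 2 ≤ (∑ b, w b * (μ b - m b)) ^ 2 := by
    have h1 : ∑ b, w b * (μ b - m b) = (∑ b, w b * μ b) - ∑ b, w b * m b := by
      rw [← Finset.sum_sub_distrib]; congr 1; ext b; ring
    have h2 : ∑ b, w b * μ b ≤ ∑ b, w b * (μ b - m b) := by rw [h1]; linarith
    exact pow_le_pow_left₀ hwμ h2 2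
  have hDhalf : ∑ b, π b * (μ b - m b) ^ 2 / (2 * σ2 b) = D / 2 := by
    rw [hD, Finset.sum_div]
    congr 1; ext b; ring
  rw [hDhalf, div_le_div_iff₀ hQpos (by norm_num : (0:ℝ) < 2)]
  calc (1/2) * (∑ b, w b * μ b) ^ 2 * 2 = (∑ b, w b * μ b) ^ 2 := by ring
    _ ≤ (∑ b, w b * (μ b - m b)) ^ 2 := hnum
    _ ≤ Q * D := hCS
    _ = D * Q := by ring
open Finset

private lemma cost_update {K : ℕ} (μ σ2 π : Fin K → ℝ) (hσ : ∀ b, 0 < σ2 b)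
    (m : Fin K → ℝ) (b : Fin K) (t : ℝ) :
    ∑ c, π c * (μ c - Function.update m b (m b + t) c) ^ 2 / (2 * σ2 c)
      = (∑ c, π c * (μ c - m c) ^ 2 / (2 * σ2 c))
        - t * (π b * (μ b - m b) / σ2 b) + t ^ 2 * (π b / (2 * σ2 b)) := by
  have key : ∀ (g : Fin K → ℝ),
      ∑ c, π c * (μ c - g c) ^ 2 / (2 * σ2 c)
      = π b * (μ b - g b) ^ 2 / (2 * σ2 b)
        + ∑ c ∈ Finset.univ.erase b, π c * (μ c - g c) ^ 2 / (2 * σ2 c) := fun g =>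
    (Finset.add_sum_erase _ _ (mem_univ b)).symm
  rw [key, key m]
  have h1 : ∑ c ∈ Finset.univ.erase b,
      π c * (μ c - Function.update m b (m b + t) c) ^ 2 / (2 * σ2 c)
      = ∑ c ∈ Finset.univ.erase b, π c * (μ c - m c) ^ 2 / (2 * σ2 c) := by
    apply Finset.sum_congr rfl
    intro c hc
    rw [Function.update_of_ne (Finset.ne_of_mem_erase hc)]
  rw [h1, Function.update_self]
  have h2 : π b * (μ b - (m b + t)) ^ 2 / (2 * σ2 b)
      = π b * (μ b - m b) ^ 2 / (2 * σ2 b)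
        - t * (π b * (μ b - m b) / σ2 b) + t ^ 2 * (π b / (2 * σ2 b)) := by
    have := (hσ b).ne'
    field_simp
    ring
  rw [h2]; ring

private lemma cost_shift {K : ℕ} (μ σ2 π : Fin K → ℝ) (hσ : ∀ b, 0 < σ2 b)
    (m : Fin K → ℝ) (t : ℝ) :
    ∑ c, π c * (μ c - (m c + t)) ^ 2 / (2 * σ2 c)
      = (∑ c, π c * (μ c - m c) ^ 2 / (2 * σ2 c))
        - t * (∑ c, π c * (μ c - m c) / σ2 c) + t ^ 2 * (∑ c, π c / (2 * σ2 c)) := by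
  rw [Finset.mul_sum, Finset.mul_sum, ← Finset.sum_sub_distrib, ← Finset.sum_add_distrib]
  apply Finset.sum_congr rfl
  intro c _
  have := (hσ c).ne'
  field_simp
  ring
open Finset

section Aux
variable {K : ℕ}

private lemma exists_minimizer (μ σ2 π : Fin K → ℝ)
    (hσ : ∀ b, 0 < σ2 b) (hπ : ∀ b, 0 < π b) (a : Fin K) :
    ∃ m0 ∈ {m : Fin K → ℝ | ∀ b, m b ≤ m a},
      ∀ m ∈ {m : Fin K → ℝ | ∀ b, m b ≤ m a},
        (∑ b, π b * (μ b - m0 b) ^ 2 / (2 * σ2 b)) ≤ ∑ b, π b * (μ b - m b) ^ 2 / (2 * σ2 b) := by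
  classical
  set cost : (Fin K → ℝ) → ℝ := fun m => ∑ b, π b * (μ b - m b) ^ 2 / (2 * σ2 b) with hcost
  set S : Set (Fin K → ℝ) := {m | ∀ b, m b ≤ m a} with hS
  have hcost_cont : Continuous cost := by
    apply continuous_finset_sum
    intro b _
    exact (continuous_const.mul ((continuous_const.sub (continuous_apply b)).pow 2)).div_const _
  have hSclosed : IsClosed S := by
    have h : S = ⋂ b, {m : Fin K → ℝ | m b ≤ m a} := by
      ext m; simp [hS, Set.mem_iInter]
    rw [h]
    exact isClosed_iInter fun b => isClosed_le (continuous_apply b) (continuous_apply a)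
  have h0S : (fun _ => (0:ℝ)) ∈ S := fun b => le_refl 0
  set c0 := cost (fun _ => 0) with hc0
  set T := S ∩ {m | cost m ≤ c0} with hT
  have hTne : T.Nonempty := ⟨fun _ => 0, h0S, le_refl c0⟩
  have hTclosed : IsClosed T := hSclosed.inter (isClosed_le hcost_cont continuous_const)
  have hterm : ∀ (m : Fin K → ℝ) (b : Fin K), 0 ≤ π b * (μ b - m b) ^ 2 / (2 * σ2 b) :=
    fun m b => div_nonneg (mul_nonneg (hπ b).le (sq_nonneg _)) (by linarith [hσ b])
  set A : Fin K → ℝ := fun b => Real.sqrt (c0 * (2 * σ2 b) / π b) with hA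
  have hTsub : T ⊆ Set.pi Set.univ (fun b => Set.Icc (μ b - A b) (μ b + A b)) := by
    rintro m ⟨hmS, hmc⟩ b _
    have h1 : π b * (μ b - m b) ^ 2 / (2 * σ2 b) ≤ cost m :=
      Finset.single_le_sum (fun c _ => hterm m c) (mem_univ b)
    have h2 : (μ b - m b) ^ 2 ≤ c0 * (2 * σ2 b) / π b := by
      have h1' : π b * (μ b - m b) ^ 2 / (2 * σ2 b) ≤ c0 := le_trans h1 hmc
      rw [div_le_iff₀ (by linarith [hσ b] : (0:ℝ) < 2 * σ2 b)] at h1'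
      rw [le_div_iff₀ (hπ b)]
      nlinarith [h1']
    have h3 : |μ b - m b| ≤ A b := by
      rw [hA, ← Real.sqrt_sq_eq_abs]
      exact Real.sqrt_le_sqrt h2
    rw [abs_le] at h3
    constructor <;> [linarith [h3.2]; linarith [h3.1]]
  have hTcompact : IsCompact T :=
    IsCompact.of_isClosed_subset (isCompact_univ_pi fun b => isCompact_Icc) hTclosed hTsub
  obtain ⟨m0, hm0T, hm0min⟩ := hTcompact.exists_isMinOn hTne hcost_cont.continuousOn
  refine ⟨m0, hm0T.1, fun m hm => ?_⟩
  by_cases h : cost m ≤ c0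
  · exact isMinOn_iff.mp hm0min m ⟨hm, h⟩
  · exact le_trans (isMinOn_iff.mp hm0min _ ⟨h0S, le_refl c0⟩) (le_of_not_ge h)

end Aux

/-- SNR maximization equals Gaussian KL-projection onto the composite null `H_a`. -/
theorem stmt_4 {K : ℕ} (μ σ2 π : Fin K → ℝ)
    (hσ : ∀ b, 0 < σ2 b) (hπ : ∀ b, 0 < π b) (hπs : ∑ b, π b = 1)
    (a : Fin K)
    (ha : μ a < Finset.univ.sup' ⟨a, Finset.mem_univ a⟩ μ) :
    sSup ((fun w : Fin K → ℝ =>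
        (1 / 2) * (∑ b, w b * μ b) ^ 2 / (∑ b, (w b) ^ 2 * σ2 b / π b)) ''
      {w | w a = -1 ∧ (∀ b, b ≠ a → 0 ≤ w b) ∧
        (∑ b ∈ Finset.univ.erase a, w b) = 1 ∧ 0 ≤ ∑ b, w b * μ b}) =
    sInf ((fun m : Fin K → ℝ =>
        ∑ b, π b * (μ b - m b) ^ 2 / (2 * σ2 b)) ''
      {m | ∀ b, m b ≤ m a}) := by
  classical
  obtain ⟨m0, hm0S, hmin⟩ := exists_minimizer μ σ2 π hσ hπ a
  have hσ2 : ∀ b : Fin K, (0:ℝ) < 2 * σ2 b := fun b => by linarith [hσ b]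
  -- KKT stationarity conditions for the minimizer
  have hKKT1 : ∀ b, b ≠ a → 0 ≤ π b * (μ b - m0 b) / σ2 b := by
    intro b hb
    have key : ∀ t : ℝ, t ≤ 0 →
        0 ≤ -t * (π b * (μ b - m0 b) / σ2 b) + t ^ 2 * (π b / (2 * σ2 b)) := by
      intro t ht
      have hfeas : Function.update m0 b (m0 b + t) ∈ {m : Fin K → ℝ | ∀ c, m c ≤ m a} := by
        intro c
        rw [Function.update_of_ne (Ne.symm hb)]
        rcases eq_or_ne c b with rfl | hc
        · rw [Function.update_self]; linarith [hm0S c]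
        · rw [Function.update_of_ne hc]; exact hm0S c
      have h := hmin _ hfeas
      rw [cost_update μ σ2 π hσ m0 b t] at h
      linarith
    have h2 := quad_aux_pos (r := -(π b * (μ b - m0 b) / σ2 b))
      (div_pos (hπ b) (hσ2 b)) one_pos
      (fun t ht0 ht1 => by nlinarith [key (-t) (by linarith : -t ≤ 0)])
    linarith
  have hKKT2 : ∀ b, b ≠ a →
      (π b * (μ b - m0 b) / σ2 b) * m0 b = (π b * (μ b - m0 b) / σ2 b) * m0 a := by
    intro b hb
    rcases eq_or_lt_of_le (hm0S b) with heq | hlt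
    · rw [heq]
    · have hrb0 : π b * (μ b - m0 b) / σ2 b = 0 := by
        apply quad_aux_zero (div_pos (hπ b) (hσ2 b)) (show (0:ℝ) < m0 a - m0 b by linarith)
        intro t ht
        have hfeas : Function.update m0 b (m0 b + t) ∈ {m : Fin K → ℝ | ∀ c, m c ≤ m a} := by
          intro c
          rw [Function.update_of_ne (Ne.symm hb)]
          rcases eq_or_ne c b with rfl | hc
          · rw [Function.update_self]
            have := abs_le.mp ht
            linarith [this.2]
          · rw [Function.update_of_ne hc]; exact hm0S c
        have h := hmin _ hfeas
        rw [cost_update μ σ2 π hσ m0 b t] at h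
        linarith
      rw [hrb0, zero_mul, zero_mul]
  have hsum : ∑ c, π c * (μ c - m0 c) / σ2 c = 0 := by
    have hC : (0:ℝ) < ∑ c, π c / (2 * σ2 c) :=
      Finset.sum_pos (fun c _ => div_pos (hπ c) (hσ2 c)) ⟨a, mem_univ a⟩
    apply quad_aux_zero hC one_pos
    intro t ht
    have hfeas : (fun c => m0 c + t) ∈ {m : Fin K → ℝ | ∀ c, m c ≤ m a} :=
      fun c => add_le_add_left (hm0S c) t
    have h := hmin _ hfeas
    rw [cost_shift μ σ2 π hσ m0 t] at h
    linarith
  -- strict negativity at a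
  have hra : π a * (μ a - m0 a) / σ2 a < 0 := by
    have hsplit0 : ∑ c, π c * (μ c - m0 c) / σ2 c = π a * (μ a - m0 a) / σ2 a
        + ∑ c ∈ Finset.univ.erase a, π c * (μ c - m0 c) / σ2 c :=
      (Finset.add_sum_erase _ _ (mem_univ a)).symm
    have hsplit : π a * (μ a - m0 a) / σ2 a
        + ∑ c ∈ Finset.univ.erase a, π c * (μ c - m0 c) / σ2 c = 0 := by
      rw [← hsplit0]; exact hsum
    have herase_nonneg : 0 ≤ ∑ c ∈ Finset.univ.erase a, π c * (μ c - m0 c) / σ2 c :=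
      Finset.sum_nonneg fun c hc => hKKT1 c (Finset.ne_of_mem_erase hc)
    rcases lt_or_eq_of_le (show π a * (μ a - m0 a) / σ2 a ≤ 0 by linarith) with h | h
    · exact h
    -- contradiction case: minimizer equals μ
    · exfalso
      have herase0 : ∑ c ∈ Finset.univ.erase a, π c * (μ c - m0 c) / σ2 c = 0 := by linarith
      have hall : ∀ c, π c * (μ c - m0 c) / σ2 c = 0 := by
        intro c
        rcases eq_or_ne c a with rfl | hc
        · exact h
        · exact (Finset.sum_eq_zero_iff_of_nonneg
            (fun d hd => hKKT1 d (Finset.ne_of_mem_erase hd))).mp herase0 c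
            (Finset.mem_erase.mpr ⟨hc, mem_univ c⟩)
      have heq : ∀ c, μ c = m0 c := by
        intro c
        have h1 := hall c
        have h2 := (hπ c).ne'
        have h3 := (hσ c).ne'
        have h4 : π c * (μ c - m0 c) = 0 := by
          rcases div_eq_zero_iff.mp h1 with h | h
          · exact h
          · exact absurd h h3
        rcases mul_eq_zero.mp h4 with h | h
        · exact absurd h h2
        · linarith
      have : Finset.univ.sup' ⟨a, Finset.mem_univ a⟩ μ ≤ μ a := by
        apply Finset.sup'_le
        intro c _
        rw [heq c, heq a]
        exact hm0S c
      linarith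
  set ca : ℝ := -(π a * (μ a - m0 a) / σ2 a) with hca_def
  have hca : 0 < ca := by rw [hca_def]; linarith
  have hnuma : π a * (μ a - m0 a) / σ2 a = -ca := by rw [hca_def]; ring
  set w : Fin K → ℝ := fun b => (π b * (μ b - m0 b) / σ2 b) / ca with hw_def
  have hwb : ∀ b, w b = (π b * (μ b - m0 b) / σ2 b) / ca := fun b => rfl
  have hwa : w a = -1 := by rw [hwb, hnuma, neg_div, div_self hca.ne']
  have hw0 : ∀ b, b ≠ a → 0 ≤ w b := fun b hb => div_nonneg (hKKT1 b hb) hca.le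
  have herase_eq : ∑ b ∈ Finset.univ.erase a, π b * (μ b - m0 b) / σ2 b = ca := by
    have h : π a * (μ a - m0 a) / σ2 a + ∑ b ∈ Finset.univ.erase a, π b * (μ b - m0 b) / σ2 b
        = ∑ c, π c * (μ c - m0 c) / σ2 c :=
      Finset.add_sum_erase _ (fun c => π c * (μ c - m0 c) / σ2 c) (mem_univ a)
    rw [hsum, hnuma] at h
    linarith
  have hws : ∑ b ∈ Finset.univ.erase a, w b = 1 := by
    simp only [hwb]
    rw [← Finset.sum_div, herase_eq, div_self hca.ne']
  set D : ℝ := ∑ b, π b * (μ b - m0 b) ^ 2 / σ2 b with hD_def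
  have hDpos : 0 < D := by
    have hsub : μ a - m0 a ≠ 0 := by
      intro h
      rw [show π a * (μ a - m0 a) / σ2 a = 0 by rw [h]; ring] at hra
      exact lt_irrefl 0 hra
    have hterma : 0 < π a * (μ a - m0 a) ^ 2 / σ2 a := by
      apply div_pos _ (hσ a)
      apply mul_pos (hπ a)
      rcases hsub.lt_or_gt with h | h <;> nlinarith
    have hle : π a * (μ a - m0 a) ^ 2 / σ2 a ≤ D :=
      Finset.single_le_sum (f := fun c => π c * (μ c - m0 c) ^ 2 / σ2 c)
        (fun c _ => div_nonneg (mul_nonneg (hπ c).le (sq_nonneg _)) (hσ c).le) (mem_univ a)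
    linarith
  have hnumsum : ∑ b, w b * μ b = D / ca := by
    have h1 : ∑ b, w b * μ b = (∑ b, (π b * (μ b - m0 b) / σ2 b) * μ b) / ca := by
      rw [Finset.sum_div]
      apply Finset.sum_congr rfl
      intro b _
      rw [hwb]; ring
    have h2 : ∑ b, (π b * (μ b - m0 b) / σ2 b) * m0 b = 0 := by
      have hsplit : (π a * (μ a - m0 a) / σ2 a) * m0 a
          + ∑ c ∈ Finset.univ.erase a, (π c * (μ c - m0 c) / σ2 c) * m0 c
          = ∑ c, (π c * (μ c - m0 c) / σ2 c) * m0 c :=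
        Finset.add_sum_erase _ (fun c => (π c * (μ c - m0 c) / σ2 c) * m0 c) (mem_univ a)
      have h3 : ∑ c ∈ Finset.univ.erase a, (π c * (μ c - m0 c) / σ2 c) * m0 c
          = ∑ c ∈ Finset.univ.erase a, (π c * (μ c - m0 c) / σ2 c) * m0 a :=
        Finset.sum_congr rfl fun c hc => hKKT2 c (Finset.ne_of_mem_erase hc)
      rw [← hsplit, h3, ← Finset.sum_mul, herase_eq, hnuma]
      ring
    have h4 : ∑ b, (π b * (μ b - m0 b) / σ2 b) * μ b
        = (∑ b, (π b * (μ b - m0 b) / σ2 b) * (μ b - m0 b))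
          + ∑ b, (π b * (μ b - m0 b) / σ2 b) * m0 b := by
      rw [← Finset.sum_add_distrib]
      apply Finset.sum_congr rfl
      intro b _; ring
    have h5 : ∑ b, (π b * (μ b - m0 b) / σ2 b) * (μ b - m0 b) = D := by
      rw [hD_def]
      apply Finset.sum_congr rfl
      intro b _; ring
    rw [h1, h4, h5, h2, add_zero]
  have hden : ∑ b, (w b) ^ 2 * σ2 b / π b = D / ca ^ 2 := by
    have h1 : ∀ b : Fin K, (w b) ^ 2 * σ2 b / π b
        = (π b * (μ b - m0 b) ^ 2 / σ2 b) / ca ^ 2 := by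
      intro b
      rw [hwb]
      have h2 := (hπ b).ne'
      have h3 := (hσ b).ne'
      field_simp
    simp only [h1]
    rw [← Finset.sum_div, hD_def]
  have hcost0 : ∑ b, π b * (μ b - m0 b) ^ 2 / (2 * σ2 b) = D / 2 := by
    rw [hD_def, Finset.sum_div]
    apply Finset.sum_congr rfl
    intro b _; ring
  have hval : (1 / 2) * (∑ b, w b * μ b) ^ 2 / (∑ b, (w b) ^ 2 * σ2 b / π b)
      = ∑ b, π b * (μ b - m0 b) ^ 2 / (2 * σ2 b) := by
    rw [hnumsum, hden, hcost0]
    field_simp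
  have hwnn : 0 ≤ ∑ b, w b * μ b := by
    rw [hnumsum]; exact (div_pos hDpos hca).le
  -- assemble
  have hmem_w : (∑ b, π b * (μ b - m0 b) ^ 2 / (2 * σ2 b)) ∈
      ((fun w : Fin K → ℝ =>
        (1 / 2) * (∑ b, w b * μ b) ^ 2 / (∑ b, (w b) ^ 2 * σ2 b / π b)) ''
      {w | w a = -1 ∧ (∀ b, b ≠ a → 0 ≤ w b) ∧
        (∑ b ∈ Finset.univ.erase a, w b) = 1 ∧ 0 ≤ ∑ b, w b * μ b}) :=
    ⟨w, ⟨hwa, hw0, hws, hwnn⟩, hval⟩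
  have hub : ∀ x ∈ ((fun w : Fin K → ℝ =>
        (1 / 2) * (∑ b, w b * μ b) ^ 2 / (∑ b, (w b) ^ 2 * σ2 b / π b)) ''
      {w | w a = -1 ∧ (∀ b, b ≠ a → 0 ≤ w b) ∧
        (∑ b ∈ Finset.univ.erase a, w b) = 1 ∧ 0 ≤ ∑ b, w b * μ b}),
      x ≤ ∑ b, π b * (μ b - m0 b) ^ 2 / (2 * σ2 b) := by
    rintro x ⟨w', ⟨h1, h2, h3, h4⟩, rfl⟩
    exact weak_dual μ σ2 π hσ hπ a w' m0 h1 h2 h3 h4 hm0S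
  have hlb : ∀ x ∈ ((fun m : Fin K → ℝ =>
        ∑ b, π b * (μ b - m b) ^ 2 / (2 * σ2 b)) '' {m | ∀ b, m b ≤ m a}),
      (∑ b, π b * (μ b - m0 b) ^ 2 / (2 * σ2 b)) ≤ x := by
    rintro x ⟨m, hm, rfl⟩
    exact hmin m hm
  have hL : sSup ((fun w : Fin K → ℝ =>
        (1 / 2) * (∑ b, w b * μ b) ^ 2 / (∑ b, (w b) ^ 2 * σ2 b / π b)) ''
      {w | w a = -1 ∧ (∀ b, b ≠ a → 0 ≤ w b) ∧
        (∑ b ∈ Finset.univ.erase a, w b) = 1 ∧ 0 ≤ ∑ b, w b * μ b})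
      = ∑ b, π b * (μ b - m0 b) ^ 2 / (2 * σ2 b) :=
    le_antisymm (csSup_le ⟨_, hmem_w⟩ hub)
      (le_csSup ⟨_, hub⟩ hmem_w)
  have hR : sInf ((fun m : Fin K → ℝ =>
        ∑ b, π b * (μ b - m b) ^ 2 / (2 * σ2 b)) '' {m | ∀ b, m b ≤ m a})
      = ∑ b, π b * (μ b - m0 b) ^ 2 / (2 * σ2 b) :=
    le_antisymm (csInf_le ⟨_, hlb⟩ ⟨m0, hm0S, rfl⟩)
      (le_csInf ⟨_, ⟨m0, hm0S, rfl⟩⟩ hlb)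
  rw [hL, hR]
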